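/- Let A be a unital C*-algebra, x ∈ A invertible, w ∈ A positive invertible with ‖w‖ < 1 and x x* = (1-w)^2 w⁻¹. Define a = (1+w)^{-1/2} w^{1/2}, b = (1+w)^{-1/2}, c = x⁻¹ (1+w)^{-1/2} w^{-1/2} (1-w), d = -x⁻¹ (1+w)^{-1/2} (1-w). Then a* a + c* c = 1, b* b + d* d = 1, a c* + b d* = 0, and a* b + c* d = 0. -/

import Mathlib

/-!
Write `s = w^{1/2}` and `t = (1 + w)^{1/2}`; both are self-adjoint, commute with each other and
with `1 - w`, and `t` is invertible. The element `v = x⁻¹ (1 - w) s⁻¹` is invertible with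
`v v* = x⁻¹ (1 - w) w⁻¹ (1 - w) x*⁻¹ = x⁻¹ (x x*) x*⁻¹ = 1`, hence unitary. With `p = t⁻¹ s` and
`q = t⁻¹` we have `a = p`, `b = q`, `c = v q`, `d = -v p`, i.e. the matrix is
`diag(1, v) · [[p, q], [q, -p]]` where `p, q` are commuting self-adjoint elements with
`p² + q² = t⁻² (w + 1) = 1`; the column relations of such a matrix are immediate.
-/

open scoped Ring

section RingInverse

variable {M₀ : Type*} [MonoidWithZero M₀] {a b : M₀}

theorem Commute.ringInverse_right (h : Commute a b) : Commute a b⁻¹ʳ := by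
  by_cases hb : IsUnit b
  · obtain ⟨u, rfl⟩ := hb
    rw [Ring.inverse_unit]
    exact h.units_inv_right
  · rw [Ring.inverse_non_unit b hb]
    exact Commute.zero_right a

theorem Commute.ringInverse_left (h : Commute a b) : Commute a⁻¹ʳ b :=
  h.symm.ringInverse_right.symm

end RingInverse

theorem Commute.cfcSqrt_left {A : Type*} [CStarAlgebra A] [PartialOrder A] [StarOrderedRing A]
    {a b : A} (h : Commute a b) : Commute (CFC.sqrt a) b := by
  rw [CFC.sqrt_eq_cfc]
  exact h.cfc_nnreal _

section

variable {R : Type*} [Ring R]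

theorem ringInverse_mul_mul_self_add_mul_self_eq_one {s t : R} (hst : Commute s t)
    (ht : IsUnit t) (htt : t * t = 1 + s * s) : t⁻¹ʳ * s * (t⁻¹ʳ * s) + t⁻¹ʳ * t⁻¹ʳ = 1 := by
  calc t⁻¹ʳ * s * (t⁻¹ʳ * s) + t⁻¹ʳ * t⁻¹ʳ = t⁻¹ʳ * t⁻¹ʳ * (1 + s * s) := by
        rw [mul_add, mul_one, add_comm, mul_assoc, ← mul_assoc s, hst.ringInverse_right.eq]; simp only [mul_assoc]
    _ = 1 := by
        rw [← htt, mul_assoc, Ring.inverse_mul_cancel_left _ _ ht, Ring.inverse_mul_cancel _ ht]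

variable [StarRing R]

theorem column_relations_of_isometry_mul_rotation {p q v : R} (hp : IsSelfAdjoint p)
    (hq : IsSelfAdjoint q) (hpq : Commute p q) (hpq1 : p * p + q * q = 1) (hv : star v * v = 1) :
    star p * p + star (v * q) * (v * q) = 1 ∧ star q * q + star (-(v * p)) * -(v * p) = 1 ∧
      p * star (v * q) + q * star (-(v * p)) = 0 ∧ star p * q + star (v * q) * -(v * p) = 0 := by
  have hv' (r s : R) : r * star v * (v * s) = r * s := by
    rw [mul_assoc, ← mul_assoc (star v), hv, one_mul]
  simp only [star_mul, star_neg, hp.star_eq, hq.star_eq, mul_neg, neg_mul, neg_neg, hv']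
  refine ⟨hpq1, by rw [add_comm, hpq1], ?_, ?_⟩
  · rw [← mul_assoc, ← mul_assoc, hpq.eq, add_neg_cancel]
  · rw [hpq.eq, add_neg_cancel]

theorem IsSelfAdjoint.ringInverse_mul {s t : R} (hs : IsSelfAdjoint s) (ht : IsSelfAdjoint t)
    (hst : Commute s t) : IsSelfAdjoint (t⁻¹ʳ * s) := by
  rw [IsSelfAdjoint, star_mul, hs.star_eq, ht.ringInverse.star_eq, hst.ringInverse_right.eq]

theorem ringInverse_mul_mul_ringInverse_mem_unitary {x m s w : R} (hx : IsUnit x) (hm : IsUnit m)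
    (hs : IsUnit s) (hm' : IsSelfAdjoint m) (hs' : IsSelfAdjoint s) (hss : s * s = w)
    (hmw : Commute m w) (hxx : x * star x = m ^ 2 * w⁻¹ʳ) :
    x⁻¹ʳ * m * s⁻¹ʳ ∈ unitary R := by
  rw [(hx.ringInverse.mul hm |>.mul hs.ringInverse).mem_unitary_iff_mul_star_self]
  have hSS : s⁻¹ʳ * s⁻¹ʳ = w⁻¹ʳ := by rw [← Ring.mul_inverse_rev' (Commute.refl s), hss]
  have hmwm : m * w⁻¹ʳ * m = x * star x := by
    rw [hxx, mul_assoc, ← hmw.ringInverse_right.eq, ← mul_assoc, sq]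
  calc x⁻¹ʳ * m * s⁻¹ʳ * star (x⁻¹ʳ * m * s⁻¹ʳ)
        = x⁻¹ʳ * (m * w⁻¹ʳ * m) * star x⁻¹ʳ := by
        simp only [star_mul, hm'.star_eq, hs'.ringInverse.star_eq, ← hSS, mul_assoc]
    _ = x⁻¹ʳ * (x * star x) * star x⁻¹ʳ := by rw [hmwm]
    _ = 1 := by
        rw [Ring.inverse_mul_cancel_left _ _ hx, ← star_mul, Ring.inverse_mul_cancel _ hx,
          star_one]

end

/-- Column relations for the matrix `U` from Lemma 4. -/
theorem stmt_17 {A : Type*} [CStarAlgebra A] [PartialOrder A] [StarOrderedRing A]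
    (x w a b c d : A) (hx : IsUnit x) (hw0 : 0 ≤ w) (hw : IsUnit w) (hwn : ‖w‖ < 1)
    (hxx : x * star x = (1 - w)^2 * Ring.inverse w)
    (ha : a = Ring.inverse (CFC.sqrt (1 + w)) * CFC.sqrt w)
    (hb : b = Ring.inverse (CFC.sqrt (1 + w)))
    (hc : c = Ring.inverse x * Ring.inverse (CFC.sqrt (1 + w)) * Ring.inverse (CFC.sqrt w) * (1 - w))
    (hd : d = -(Ring.inverse x * Ring.inverse (CFC.sqrt (1 + w)) * (1 - w))) :
    star a * a + star c * c = 1 ∧ star b * b + star d * d = 1 ∧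
    a * star c + b * star d = 0 ∧ star a * b + star c * d = 0 := by
  set s := CFC.sqrt w
  set t := CFC.sqrt (1 + w)
  have hs : IsSelfAdjoint s := (CFC.sqrt_nonneg w).isSelfAdjoint
  have hss : s * s = w := CFC.sqrt_mul_sqrt_self w
  have htt : t * t = 1 + s * s := by
    rw [hss]; exact CFC.sqrt_mul_sqrt_self _ (add_nonneg zero_le_one hw0)
  have hsu : IsUnit s := (CFC.isUnit_sqrt_iff w).2 hw
  have htu : IsUnit t := (isStrictlyPositive_one.add_nonneg hw0).isUnit_cfcSqrt
  have hst : Commute s t :=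
    ((Commute.one_right w).add_right (Commute.refl w)).cfcSqrt_left.symm.cfcSqrt_left.symm
  have hsm : Commute s (1 - w) := ((Commute.one_right w).sub_right (Commute.refl w)).cfcSqrt_left
  have htm : Commute t (1 - w) :=
    ((Commute.one_right _).sub_right ((Commute.one_left w).add_left (Commute.refl w))).cfcSqrt_left
  set v := x⁻¹ʳ * (1 - w) * s⁻¹ʳ
  have hv : star v * v = 1 := Unitary.star_mul_self_of_mem <|
    ringInverse_mul_mul_ringInverse_mem_unitary hx (isUnit_one_sub_of_norm_lt_one hwn) hsu
      (.sub (.one _) (.of_nonneg hw0)) hs hss ((Commute.one_left w).sub_left (Commute.refl w)) hxx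
  have hc' : c = v * b := by
    simp only [hc, hb, v, mul_assoc]
    congr 1
    rw [hsm.ringInverse_left.eq, ← mul_assoc, htm.ringInverse_left.eq, mul_assoc,
      hst.ringInverse_ringInverse.symm.eq]
  have hd' : d = -(v * a) := by
    simp only [hd, ha, v, mul_assoc]
    congr 2
    rw [← hst.ringInverse_right.eq, Ring.inverse_mul_cancel_left _ _ hsu, htm.ringInverse_left.eq]
  rw [hc', hd', ha, hb]
  have ht : IsSelfAdjoint t := (CFC.sqrt_nonneg (1 + w)).isSelfAdjoint
  exact column_relations_of_isometry_mul_rotation (hs.ringInverse_mul ht hst) ht.ringInverse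
    ((Commute.refl _).mul_left hst.ringInverse_right)
    (ringInverse_mul_mul_self_add_mul_self_eq_one hst htu htt) hv
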